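/- arXiv:2601.02974 — 6 statements merged into one kernel-verified Lean document; each statement's English description precedes it below -/
import Mathlib

section
/- Let s ≥ 2, 1 ≤ r ≤ s−1, and let a_0, …, a_s be positive integers with (a_0, …, a_s) well-formed. Set h = gcd(a_0, …, a_r), a''_i = a_i/h for 0 ≤ i ≤ r, and h' = gcd(a_{r+1}, …, a_s), a''_j = a_j/h' for r+1 ≤ j ≤ s. Let N = ℤ^{s+1}/ℤ·(a_0, …, a_s) and let u_i be the image of the i-th standard basis vector. Then the element v = (1/h')·∑_{i=0}^r a''_i u_i of N ⊗ ℚ lies in N and is a primitive element of N (i.e., v is not a nontrivial positive integer multiple of another lattice element). -/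
lemma exists_gcd_sum {ι : Type*} [DecidableEq ι] (t : Finset ι) (f : ι → ℕ) :
    ∃ c : ι → ℤ, ∑ i ∈ t, c i * (f i : ℤ) = ((t.gcd f : ℕ) : ℤ) := by
  induction t using Finset.induction_on with
  | empty => exact ⟨0, by simp⟩
  | @insert a s ha ih =>
    obtain ⟨c, hc⟩ := ih
    refine ⟨Function.update (fun i => Nat.gcdB (f a) (s.gcd f) * c i) a
      (Nat.gcdA (f a) (s.gcd f)), ?_⟩
    rw [Finset.sum_insert ha, Finset.gcd_insert]
    have h1 : ∑ i ∈ s, Function.update (fun i => Nat.gcdB (f a) (s.gcd f) * c i) a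
        (Nat.gcdA (f a) (s.gcd f)) i * (f i : ℤ)
        = Nat.gcdB (f a) (s.gcd f) * ∑ i ∈ s, c i * (f i : ℤ) := by
      rw [Finset.mul_sum]
      refine Finset.sum_congr rfl fun i hi => ?_
      rw [Function.update_of_ne (by rintro rfl; exact ha hi), mul_assoc]
    rw [h1, hc, Function.update_self]
    have h2 : ((GCDMonoid.gcd (f a) (s.gcd f) : ℕ) : ℤ)
        = (f a : ℤ) * Nat.gcdA (f a) (s.gcd f) + ((s.gcd f : ℕ) : ℤ) * Nat.gcdB (f a) (s.gcd f) := by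
      rw [show GCDMonoid.gcd (f a) (s.gcd f) = Nat.gcd (f a) (s.gcd f) from rfl]
      exact Nat.gcd_eq_gcd_ab (f a) (s.gcd f)
    rw [h2]; ring

/-- The exceptional ray of the standard weighted blowup: let `s ≥ 2`,
`1 ≤ r ≤ s − 1`, and let `(a₀,…,a_s)` be a well-formed tuple of positive
integers. With `h = gcd(a₀,…,a_r)`, `h' = gcd(a_{r+1},…,a_s)`,
`a''ᵢ = aᵢ/h` for `i ≤ r`, and `N = ℤ^{s+1}/ℤ·(a₀,…,a_s)`, the element
`v = (1/h')·∑_{i=0}^r a''ᵢ uᵢ` lies in `N` (i.e. `h'·v` is the class of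
`(a''₀,…,a''_r,0,…,0)`) and is a primitive element of `N`. -/
theorem stmt1 (s r : ℕ) (hs : 2 ≤ s) (hr1 : 1 ≤ r) (hr2 : r ≤ s - 1)
    (a : Fin (s + 1) → ℕ) (hpos : ∀ i, 0 < a i)
    (hwf : ∀ i : Fin (s + 1), (Finset.univ.erase i).gcd a = 1) :
    ∃ v : (Fin (s + 1) → ℤ) ⧸
        Submodule.span ℤ {(fun i => (a i : ℤ) : Fin (s + 1) → ℤ)},
      ((((Finset.univ.filter (fun i : Fin (s + 1) => r < (i : ℕ))).gcd a : ℕ) : ℤ)) • v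
          = Submodule.Quotient.mk
              (fun i : Fin (s + 1) =>
                if (i : ℕ) ≤ r then
                  ((a i / (Finset.univ.filter
                      (fun j : Fin (s + 1) => (j : ℕ) ≤ r)).gcd a : ℕ) : ℤ)
                else 0) ∧
      ∀ (m : ℤ) (w : (Fin (s + 1) → ℤ) ⧸
          Submodule.span ℤ {(fun i => (a i : ℤ) : Fin (s + 1) → ℤ)}),
        0 < m → v = m • w → m = 1 := by
  classical
  set A : Fin (s + 1) → ℤ := fun i => (a i : ℤ) with hA
  set S1 : Finset (Fin (s + 1)) := Finset.univ.filter (fun i => (i : ℕ) ≤ r) with hS1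
  set S2 : Finset (Fin (s + 1)) := Finset.univ.filter (fun i => r < (i : ℕ)) with hS2
  set h : ℕ := S1.gcd a with hh
  set h' : ℕ := S2.gcd a with hh'
  -- membership facts
  have hmem1 : ∀ i : Fin (s + 1), (i : ℕ) ≤ r → i ∈ S1 := fun i hi =>
    Finset.mem_filter.2 ⟨Finset.mem_univ i, hi⟩
  have hmem2 : ∀ i : Fin (s + 1), r < (i : ℕ) → i ∈ S2 := fun i hi =>
    Finset.mem_filter.2 ⟨Finset.mem_univ i, hi⟩
  have hdvd1 : ∀ i : Fin (s + 1), (i : ℕ) ≤ r → h ∣ a i := fun i hi =>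
    Finset.gcd_dvd (hmem1 i hi)
  have hdvd2 : ∀ i : Fin (s + 1), r < (i : ℕ) → h' ∣ a i := fun i hi =>
    Finset.gcd_dvd (hmem2 i hi)
  have hrs : r < s := lt_of_le_of_lt hr2 (Nat.sub_lt (by omega) one_pos)
  have hi0 : ((0 : Fin (s + 1)) : ℕ) ≤ r := by simp
  have hlast : r < ((Fin.last s : Fin (s + 1)) : ℕ) := by simpa using hrs
  have hhne : h ≠ 0 := by
    intro h0
    have := Finset.gcd_eq_zero_iff.1 h0 _ (hmem1 0 hi0)
    exact (hpos 0).ne' this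
  have hh'ne : h' ≠ 0 := by
    intro h0
    have := Finset.gcd_eq_zero_iff.1 h0 _ (hmem2 (Fin.last s) hlast)
    exact (hpos _).ne' this
  -- coprimality
  have hcop : Nat.gcd h h' = 1 := by
    have hdvd : ∀ i : Fin (s + 1), Nat.gcd h h' ∣ a i := by
      intro i
      rcases le_or_gt (i : ℕ) r with hi | hi
      · exact dvd_trans (Nat.gcd_dvd_left _ _) (hdvd1 i hi)
      · exact dvd_trans (Nat.gcd_dvd_right _ _) (hdvd2 i hi)
    have : Nat.gcd h h' ∣ (Finset.univ.erase 0).gcd a :=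
      Finset.dvd_gcd fun i _ => hdvd i
    rw [hwf 0] at this
    exact Nat.dvd_one.1 this
  -- Bezout: u * h' - t * h = 1
  set u : ℤ := Nat.gcdB h h' with hu
  set t : ℤ := -Nat.gcdA h h' with ht
  have hbez : u * (h' : ℤ) - t * (h : ℤ) = 1 := by
    have := Nat.gcd_eq_gcd_ab h h'
    rw [hcop] at this
    push_cast at this
    rw [hu, ht]; linarith
  -- the vector b
  set bn : Fin (s + 1) → ℕ := fun i => if (i : ℕ) ≤ r then a i / h else a i / h' with hbn
  have hb1 : ∀ i : Fin (s + 1), (i : ℕ) ≤ r → (h : ℤ) * bn i = a i := by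
    intro i hi
    rw [hbn]; simp only [if_pos hi]
    rw [← Nat.cast_mul, Nat.mul_div_cancel' (hdvd1 i hi)]
  have hb2 : ∀ i : Fin (s + 1), r < (i : ℕ) → (h' : ℤ) * bn i = a i := by
    intro i hi
    rw [hbn]; simp only [if_neg (not_le.2 hi)]
    rw [← Nat.cast_mul, Nat.mul_div_cancel' (hdvd2 i hi)]
  set z : Fin (s + 1) → ℤ := fun i => if (i : ℕ) ≤ r then u * bn i else t * bn i with hz
  refine ⟨Submodule.Quotient.mk z, ?_, ?_⟩
  · -- h' • mk z = mk x
    rw [← Submodule.Quotient.mk_smul, Submodule.Quotient.eq]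
    have key : ((h' : ℤ) • z - fun i : Fin (s + 1) =>
        if (i : ℕ) ≤ r then ((a i / h : ℕ) : ℤ) else 0) = t • A := by
      funext i
      simp only [Pi.smul_apply, Pi.sub_apply, smul_eq_mul, hz, hA]
      rcases le_or_gt (i : ℕ) r with hi | hi
      · simp only [if_pos hi]
        have hbi : ((a i / h : ℕ) : ℤ) = bn i := by rw [hbn]; simp [if_pos hi]
        rw [hbi, ← hb1 i hi]
        nlinarith [hbez]
      · simp only [if_neg (not_le.2 hi)]
        rw [← hb2 i hi]; ring
    rw [key]
    exact Submodule.smul_mem _ _ (Submodule.mem_span_singleton_self A)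
  · -- primitivity
    intro m w hm hvm
    obtain ⟨y, rfl⟩ := Submodule.Quotient.mk_surjective _ w
    rw [← Submodule.Quotient.mk_smul, Submodule.Quotient.eq,
      Submodule.mem_span_singleton] at hvm
    obtain ⟨k, hk⟩ := hvm
    have hzy : ∀ i, z i = m * y i + k * A i := by
      intro i
      have := congrFun hk i
      simp only [Pi.smul_apply, Pi.sub_apply, smul_eq_mul] at this
      linarith
    -- Bezout coefficients on each block
    obtain ⟨c1, hc1⟩ := exists_gcd_sum S1 (fun i => a i / h)
    obtain ⟨c2, hc2⟩ := exists_gcd_sum S2 (fun i => a i / h')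
    have hg1 : S1.gcd (fun i => a i / h) = 1 :=
      Finset.gcd_div_eq_one (hmem1 0 hi0) (hpos 0).ne'
    have hg2 : S2.gcd (fun i => a i / h') = 1 :=
      Finset.gcd_div_eq_one (hmem2 (Fin.last s) hlast) (hpos _).ne'
    rw [hg1] at hc1
    rw [hg2] at hc2
    simp only [Nat.cast_one] at hc1 hc2
    -- sums over S1 / S2 of c * bn
    have hs1 : ∑ i ∈ S1, c1 i * (bn i : ℤ) = 1 := by
      rw [← hc1]
      refine Finset.sum_congr rfl fun i hi => ?_
      have hi' := (Finset.mem_filter.1 hi).2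
      rw [hbn]; simp [if_pos hi']
    have hs2 : ∑ i ∈ S2, c2 i * (bn i : ℤ) = 1 := by
      rw [← hc2]
      refine Finset.sum_congr rfl fun i hi => ?_
      have hi' := (Finset.mem_filter.1 hi).2
      rw [hbn]; simp [if_neg (not_le.2 hi')]
    set c : Fin (s + 1) → ℤ :=
      fun i => if (i : ℕ) ≤ r then (h' : ℤ) * c1 i else -(h : ℤ) * c2 i with hcdef
    have hsplit : ∀ g : Fin (s + 1) → ℤ,
        ∑ i, g i = ∑ i ∈ S1, g i + ∑ i ∈ S2, g i := by
      intro g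
      rw [hS1, hS2]
      rw [← Finset.sum_filter_add_sum_filter_not Finset.univ (fun i : Fin (s+1) => (i : ℕ) ≤ r) g]
      congr 1
      apply Finset.sum_congr _ fun _ _ => rfl
      apply Finset.filter_congr
      intro i _
      simp [not_le]
    have hcA : ∑ i, c i * A i = 0 := by
      rw [hsplit]
      have e1 : ∑ i ∈ S1, c i * A i = (h : ℤ) * (h' : ℤ) * ∑ i ∈ S1, c1 i * (bn i : ℤ) := by
        rw [Finset.mul_sum]
        refine Finset.sum_congr rfl fun i hi => ?_
        have hi' := (Finset.mem_filter.1 hi).2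
        rw [hcdef, hA]; simp only [if_pos hi']
        rw [← hb1 i hi']; ring
      have e2 : ∑ i ∈ S2, c i * A i = -((h : ℤ) * (h' : ℤ)) * ∑ i ∈ S2, c2 i * (bn i : ℤ) := by
        rw [Finset.mul_sum]
        refine Finset.sum_congr rfl fun i hi => ?_
        have hi' := (Finset.mem_filter.1 hi).2
        rw [hcdef, hA]; simp only [if_neg (not_le.2 hi')]
        rw [← hb2 i hi']; ring
      rw [e1, e2, hs1, hs2]; ring
    have hcz : ∑ i, c i * z i = 1 := by
      rw [hsplit]
      have e1 : ∑ i ∈ S1, c i * z i = u * (h' : ℤ) * ∑ i ∈ S1, c1 i * (bn i : ℤ) := by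
        rw [Finset.mul_sum]
        refine Finset.sum_congr rfl fun i hi => ?_
        have hi' := (Finset.mem_filter.1 hi).2
        rw [hcdef, hz]; simp only [if_pos hi']; ring
      have e2 : ∑ i ∈ S2, c i * z i = -(t * (h : ℤ)) * ∑ i ∈ S2, c2 i * (bn i : ℤ) := by
        rw [Finset.mul_sum]
        refine Finset.sum_congr rfl fun i hi => ?_
        have hi' := (Finset.mem_filter.1 hi).2
        rw [hcdef, hz]; simp only [if_neg (not_le.2 hi')]; ring
      rw [e1, e2, hs1, hs2]
      linarith [hbez]
    have hfinal : (1 : ℤ) = m * ∑ i, c i * y i := by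
      rw [← hcz]
      rw [Finset.mul_sum]
      have : ∑ i, c i * z i = ∑ i, (m * (c i * y i) + k * (c i * A i)) := by
        refine Finset.sum_congr rfl fun i _ => ?_
        rw [hzy i]; ring
      rw [this, Finset.sum_add_distrib, ← Finset.mul_sum, ← Finset.mul_sum, hcA]
      ring
    have : m ∣ 1 := Dvd.intro _ hfinal.symm
    rcases Int.isUnit_iff.1 (isUnit_of_dvd_one this) with h1 | h1
    · exact h1
    · omega
end

section
/- Let V, c_1, c_2 be positive reals and c_0 ≥ 0 with c_2 ≥ c_0. Let 𝐎 ⊂ ℝ² be a compact convex set of area V whose intersection with the half-plane {x_1 ≤ c_1} equals the region {(x_1, x_2) : 0 ≤ x_1 ≤ c_1, 0 ≤ x_2 ≤ ((c_2 − c_0)/c_1)·x_1 + c_0}. Let (b_1, b_2) be the barycenter of 𝐎. Then b_1 ≤ (c_0²c_1² − 4c_0c_1V + 2c_1c_2V + 4V²)/(6 c_2 V). -/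
open MeasureTheory Set

set_option maxHeartbeats 1000000

/-- First coordinate bound for the barycenter of a convex set: let
`V, c₁, c₂ > 0`, `0 ≤ c₀ ≤ c₂`, and let `𝐎 ⊂ ℝ²` be a compact convex set of
area `V` whose intersection with `{x₁ ≤ c₁}` is the trapezoid
`{0 ≤ x₁ ≤ c₁, 0 ≤ x₂ ≤ ((c₂−c₀)/c₁)x₁ + c₀}`. Then the first coordinate
`b₁` of the barycenter satisfies
`b₁ ≤ (c₀²c₁² − 4c₀c₁V + 2c₁c₂V + 4V²)/(6c₂V)`. -/
theorem stmt2 (V c0 c1 c2 : ℝ) (hV : 0 < V) (hc1 : 0 < c1) (hc2 : 0 < c2)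
    (hc0 : 0 ≤ c0) (hc02 : c0 ≤ c2)
    (O : Set (ℝ × ℝ)) (hcpt : IsCompact O) (hconv : Convex ℝ O)
    (harea : (volume O).toReal = V)
    (hslice : O ∩ {p : ℝ × ℝ | p.1 ≤ c1} =
      {p : ℝ × ℝ | 0 ≤ p.1 ∧ p.1 ≤ c1 ∧ 0 ≤ p.2 ∧
        p.2 ≤ (c2 - c0) / c1 * p.1 + c0})
    (b1 : ℝ) (hb1 : b1 = (∫ p in O, p.1 ∂volume) / V) :
    b1 ≤ (c0 ^ 2 * c1 ^ 2 - 4 * c0 * c1 * V + 2 * c1 * c2 * V + 4 * V ^ 2)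
        / (6 * c2 * V) := by
  have hc1' : (c1 : ℝ) ≠ 0 := ne_of_gt hc1
  have hc2' : (c2 : ℝ) ≠ 0 := ne_of_gt hc2
  have hc20 : 0 ≤ c2 := hc0.trans hc02
  have hO_meas : MeasurableSet O := hcpt.isClosed.measurableSet
  set L : ℝ → ℝ := fun t => (c2 - c0) / c1 * t + c0 with hLdef
  have hmem : ∀ x y : ℝ, x ≤ c1 → ((x, y) ∈ O ↔ (0 ≤ x ∧ 0 ≤ y ∧ y ≤ L x)) := by
    intro x y hx
    constructor
    · intro hxy
      have h2 : (x, y) ∈ O ∩ {p : ℝ × ℝ | p.1 ≤ c1} := ⟨hxy, hx⟩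
      rw [hslice] at h2
      exact ⟨h2.1, h2.2.2.1, h2.2.2.2⟩
    · intro hxy
      have h2 : (x, y) ∈ {p : ℝ × ℝ | 0 ≤ p.1 ∧ p.1 ≤ c1 ∧ 0 ≤ p.2 ∧
          p.2 ≤ (c2 - c0) / c1 * p.1 + c0} := ⟨hxy.1, hx, hxy.2.1, hxy.2.2⟩
      rw [← hslice] at h2
      exact h2.1
  set sl : ℝ → Set ℝ := fun t => {y : ℝ | (t, y) ∈ O} with hsldef
  have hsl_meas : ∀ t, MeasurableSet (sl t) := fun t =>
    hO_meas.preimage measurable_prodMk_left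
  have hsl_cpt : ∀ t, IsCompact (sl t) := by
    intro t
    have h1 : sl t = Prod.snd '' (O ∩ (Prod.fst ⁻¹' {t})) := by
      ext y
      constructor
      · intro hy; exact ⟨(t, y), ⟨hy, rfl⟩, rfl⟩
      · rintro ⟨⟨x1, y1⟩, ⟨hp, hx1⟩, rfl⟩
        simp only [mem_preimage, mem_singleton_iff] at hx1
        simpa [hsldef, hx1] using hp
    rw [h1]
    exact ((hcpt.inter_right (isClosed_singleton.preimage continuous_fst)).image
      continuous_snd)
  have hsl_conv : ∀ t, Convex ℝ (sl t) := by
    intro t y1 hy1 y2 hy2 a b ha hb hab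
    have h := hconv hy1 hy2 ha hb hab
    simpa [hsldef, Prod.smul_mk, Prod.mk_add_mk, smul_eq_mul, ← add_mul, hab]
      using h
  set f : ℝ → ℝ := fun t => (volume (sl t)).toReal with hfdef
  have hfnonneg : ∀ t, 0 ≤ f t := fun t => ENNReal.toReal_nonneg
  have hfIcc : ∀ t, (sl t).Nonempty → sl t = Icc (sInf (sl t)) (sSup (sl t)) :=
    fun t hne => eq_Icc_of_connected_compact ⟨hne, (hsl_conv t).isPreconnected⟩
      (hsl_cpt t)
  have hInfSup : ∀ t, (sl t).Nonempty → sInf (sl t) ≤ sSup (sl t) := fun t hne =>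
    csInf_le_csSup hne (hsl_cpt t).bddBelow (hsl_cpt t).bddAbove
  have hfval : ∀ t, (sl t).Nonempty → f t = sSup (sl t) - sInf (sl t) := by
    intro t hne
    have hv : volume (sl t) = ENNReal.ofReal (sSup (sl t) - sInf (sl t)) := by
      conv_lhs => rw [hfIcc t hne]
      rw [Real.volume_Icc]
    rw [hfdef]
    simp only
    rw [hv, ENNReal.toReal_ofReal (sub_nonneg.2 (hInfSup t hne))]
  have hf0 : ∀ t, ¬(sl t).Nonempty → f t = 0 := by
    intro t hne
    rw [not_nonempty_iff_eq_empty] at hne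
    simp [hfdef, hne]
  have hcombo : ∀ (t1 t2 y1 y2 θ : ℝ), 0 ≤ θ → θ ≤ 1 → (t1, y1) ∈ O →
      (t2, y2) ∈ O → ((1 - θ) * t1 + θ * t2, (1 - θ) * y1 + θ * y2) ∈ O := by
    intro t1 t2 y1 y2 θ hθ0 hθ1 hm1 hm2
    have h := hconv hm1 hm2 (by linarith : (0:ℝ) ≤ 1 - θ) hθ0 (by ring)
    simpa [Prod.smul_mk, Prod.mk_add_mk, smul_eq_mul] using h
  -- slices in the strip [0, c1]
  have hslI : ∀ t, 0 ≤ t → t ≤ c1 → sl t = Icc 0 (L t) := by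
    intro t ht0 ht1
    ext y
    simp only [hsldef, mem_setOf_eq, mem_Icc]
    rw [hmem t y ht1]
    constructor
    · rintro ⟨-, h2, h3⟩; exact ⟨h2, h3⟩
    · rintro ⟨h2, h3⟩; exact ⟨ht0, h2, h3⟩
  have hLnn : ∀ t, 0 ≤ t → t ≤ c1 → 0 ≤ L t := by
    intro t ht0 ht1
    have : 0 ≤ (c2 - c0) / c1 * t :=
      mul_nonneg (div_nonneg (by linarith) hc1.le) ht0
    simp only [hLdef]; linarith
  have hfI : ∀ t, 0 ≤ t → t ≤ c1 → f t = L t := by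
    intro t ht0 ht1
    rw [hfdef]; simp only
    rw [hslI t ht0 ht1, Real.volume_Icc,
      ENNReal.toReal_ofReal (by linarith [hLnn t ht0 ht1])]
    ring
  have hLc1 : L c1 = c2 := by simp only [hLdef]; field_simp; ring
  have hOc1top : (c1, c2) ∈ O :=
    (hmem c1 c2 le_rfl).2 ⟨hc1.le, hc20, hLc1.ge⟩
  have hOc1bot : (c1, 0) ∈ O :=
    (hmem c1 0 le_rfl).2 ⟨hc1.le, le_rfl, hLnn c1 hc1.le le_rfl⟩
  have hfc1 : f c1 = c2 := by
    rw [hfI c1 hc1.le le_rfl, hLc1]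
  have hneg : ∀ t, t < 0 → sl t = ∅ := by
    intro t ht
    rw [eq_empty_iff_forall_notMem]
    intro y hy
    have := ((hmem t y (by linarith)).1 hy).1
    linarith
  -- maximal first coordinate
  obtain ⟨pm, hpmO, hpm⟩ := hcpt.exists_isMaxOn ⟨(c1, 0), hOc1bot⟩
    continuous_fst.continuousOn
  set M : ℝ := pm.1 - c1 with hMdef
  have hpm1 : pm.1 = c1 + M := by rw [hMdef]; ring
  have hM0 : 0 ≤ M := by
    have := hpm hOc1bot
    simp only [IsMaxOn, IsMaxFilter] at this
    have h2 : (c1, (0:ℝ)).1 ≤ pm.1 := hpm hOc1bot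
    simp only at h2
    linarith [h2]
  have hup : ∀ p, p ∈ O → p.1 ≤ c1 + M := by
    intro p hp
    have h2 : p.1 ≤ pm.1 := hpm hp
    linarith [h2]
  have hempty_gt : ∀ s, M < s → sl (c1 + s) = ∅ := by
    intro s hs
    rw [eq_empty_iff_forall_notMem]
    intro y hy
    have := hup (c1 + s, y) hy
    simp only at this
    linarith
  have hne_u : ∀ u, 0 ≤ u → u ≤ M → (sl (c1 + u)).Nonempty := by
    intro u hu0 huM
    rcases eq_or_lt_of_le hM0 with hM | hM
    · have hu : u = 0 := le_antisymm (huM.trans hM.symm.le) hu0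
      subst hu
      exact ⟨0, by simpa [hsldef] using hOc1bot⟩
    · set θ := u / M with hθdef
      have hθ0 : 0 ≤ θ := div_nonneg hu0 hM0
      have hθ1 : θ ≤ 1 := (div_le_one hM).2 huM
      have h := hcombo c1 (c1 + M) 0 pm.2 θ hθ0 hθ1 hOc1bot (by rwa [← hpm1, Prod.mk.eta])
      refine ⟨θ * pm.2, ?_⟩
      have he : (1 - θ) * c1 + θ * (c1 + M) = c1 + u := by
        have h1 : θ * M = u := div_mul_cancel₀ u (ne_of_gt hM)
        have h2 : (1 - θ) * c1 + θ * (c1 + M) = c1 + θ * M := by ring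
        rw [h2, h1]
      rw [he] at h
      simpa [hsldef] using h
  -- the chord inequality
  have chord : ∀ s u, 0 ≤ s → s ≤ u → 0 < u → u ≤ M →
      (1 - s / u) * c2 + (s / u) * f (c1 + u) ≤ f (c1 + s) := by
    intro s u hs0 hsu hu huM
    set θ := s / u with hθdef
    have hθ0 : 0 ≤ θ := div_nonneg hs0 hu.le
    have hθ1 : θ ≤ 1 := (div_le_one hu).2 hsu
    have hθu : θ * u = s := div_mul_cancel₀ s (ne_of_gt hu)
    have hKne := hne_u u (hs0.trans hsu) huM
    set A := sInf (sl (c1 + u)) with hA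
    set B := sSup (sl (c1 + u)) with hB
    have hAm : A ∈ sl (c1 + u) := (hsl_cpt _).sInf_mem hKne
    have hBm : B ∈ sl (c1 + u) := (hsl_cpt _).sSup_mem hKne
    have hAO : (c1 + u, A) ∈ O := hAm
    have hBO : (c1 + u, B) ∈ O := hBm
    have hcoord : (1 - θ) * c1 + θ * (c1 + u) = c1 + s := by
      have h2 : (1 - θ) * c1 + θ * (c1 + u) = c1 + θ * u := by ring
      rw [h2, hθu]
    have htop := hcombo c1 (c1 + u) c2 B θ hθ0 hθ1 hOc1top hBO
    have hbot := hcombo c1 (c1 + u) 0 A θ hθ0 hθ1 hOc1bot hAO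
    rw [hcoord] at htop hbot
    have htop' : (1 - θ) * c2 + θ * B ∈ sl (c1 + s) := htop
    have hbot' : (1 - θ) * 0 + θ * A ∈ sl (c1 + s) := hbot
    have hsne : (sl (c1 + s)).Nonempty := ⟨_, htop'⟩
    have h1 : (1 - θ) * c2 + θ * B ≤ sSup (sl (c1 + s)) :=
      le_csSup (hsl_cpt _).bddAbove htop'
    have h2 : sInf (sl (c1 + s)) ≤ (1 - θ) * 0 + θ * A :=
      csInf_le (hsl_cpt _).bddBelow hbot'
    rw [hfval _ hsne, hfval _ hKne, ← hA, ← hB]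
    nlinarith [h1, h2]
  -- Fubini
  have hvolprod : (volume : Measure (ℝ × ℝ)) = (volume : Measure ℝ).prod volume :=
    MeasureTheory.Measure.volume_eq_prod ℝ ℝ
  have hFcont : IntegrableOn (fun p : ℝ × ℝ => p.1) O volume :=
    continuous_fst.continuousOn.integrableOn_compact hcpt
  have hFind : Integrable (O.indicator fun p : ℝ × ℝ => p.1) volume :=
    hFcont.integrable_indicator hO_meas
  have hFind' : Integrable (O.indicator fun p : ℝ × ℝ => p.1)
      ((volume : Measure ℝ).prod volume) := hvolprod ▸ hFind
  have hinner : ∀ x : ℝ, (∫ y : ℝ, (O.indicator fun p : ℝ × ℝ => p.1) (x, y))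
      = x * f x := by
    intro x
    have h1 : (fun y : ℝ => (O.indicator fun p : ℝ × ℝ => p.1) (x, y))
        = (sl x).indicator (fun _ => x) := by
      funext y
      by_cases h : (x, y) ∈ O
      · rw [Set.indicator_of_mem h, Set.indicator_of_mem (show y ∈ sl x from h)]
      · rw [Set.indicator_of_notMem h,
          Set.indicator_of_notMem (show y ∉ sl x from h)]
    rw [h1, integral_indicator (hsl_meas x), setIntegral_const, smul_eq_mul,
      mul_comm]
    rfl
  have hmom : (∫ p in O, p.1 ∂volume) = ∫ x : ℝ, x * f x := by
    rw [← integral_indicator hO_meas]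
    rw [show (volume : Measure (ℝ × ℝ)) = (volume : Measure ℝ).prod volume from
      hvolprod]
    rw [integral_prod _ hFind']
    exact integral_congr_ae (Filter.Eventually.of_forall hinner)
  have hmomInt : Integrable (fun x : ℝ => x * f x) volume := by
    have := hFind'.integral_prod_left
    exact this.congr (Filter.Eventually.of_forall hinner)
  have hlin : volume O = ∫⁻ x : ℝ, volume (sl x) := by
    rw [hvolprod]
    exact Measure.prod_apply hO_meas
  have hf_meas : Measurable fun x : ℝ => volume (sl x) :=
    measurable_measure_prodMk_left hO_meas
  have hVint : (∫ x : ℝ, f x) = V := by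
    rw [hfdef]
    rw [integral_toReal hf_meas.aemeasurable
      (Filter.Eventually.of_forall fun x => (hsl_cpt x).measure_lt_top)]
    rw [← hlin, harea]
  have hfInt : Integrable f volume := by
    refine integrable_toReal_of_lintegral_ne_top hf_meas.aemeasurable ?_
    rw [← hlin]
    exact hcpt.measure_lt_top.ne
  -- shifting to the origin
  set g : ℝ → ℝ := fun s => f (c1 + s) with hgdef
  set W : ℝ := ∫ s in Ioi (0:ℝ), g s with hWdef
  have hshift : ∀ φ : ℝ → ℝ, (∫ x in Ioi c1, φ x) = ∫ s in Ioi (0:ℝ), φ (c1 + s) := by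
    intro φ
    rw [← integral_indicator measurableSet_Ioi, ← integral_indicator measurableSet_Ioi]
    rw [← integral_add_left_eq_self (fun x => (Ioi c1).indicator φ x) c1]
    congr 1
    funext s
    by_cases h : (0:ℝ) < s
    · rw [Set.indicator_of_mem (by simpa using h : c1 + s ∈ Ioi c1),
        Set.indicator_of_mem (by simpa using h)]
    · rw [Set.indicator_of_notMem (by simpa using h : ¬ c1 + s ∈ Ioi c1),
        Set.indicator_of_notMem (by simpa using h)]
  have hindshift : ∀ φ : ℝ → ℝ, IntegrableOn φ (Ioi c1) volume →
      IntegrableOn (fun s => φ (c1 + s)) (Ioi (0:ℝ)) volume := by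
    intro φ hφ
    refine (integrable_indicator_iff measurableSet_Ioi).mp ?_
    have h2 : Integrable ((Ioi c1).indicator φ) volume :=
      (integrable_indicator_iff measurableSet_Ioi).2 hφ
    have h3 := h2.comp_add_left c1
    refine h3.congr (Filter.Eventually.of_forall fun s => ?_)
    show (Ioi c1).indicator φ (c1 + s) = (Ioi 0).indicator (fun s => φ (c1 + s)) s
    by_cases h : (0:ℝ) < s
    · rw [Set.indicator_of_mem (by simpa using h : c1 + s ∈ Ioi c1),
        Set.indicator_of_mem (by simpa using h)]
    · rw [Set.indicator_of_notMem (by simpa using h : ¬ c1 + s ∈ Ioi c1),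
        Set.indicator_of_notMem (by simpa using h)]
  have hgInt : IntegrableOn g (Ioi (0:ℝ)) volume := hindshift f hfInt.integrableOn
  have hcgInt : IntegrableOn (fun s => (c1 + s) * g s) (Ioi (0:ℝ)) volume :=
    hindshift (fun x => x * f x) hmomInt.integrableOn
  have hsgInt : IntegrableOn (fun s => s * g s) (Ioi (0:ℝ)) volume := by
    have h1 : IntegrableOn (fun s => c1 * g s) (Ioi (0:ℝ)) volume :=
      hgInt.const_mul c1
    exact MeasureTheory.IntegrableOn.congr_fun (hcgInt.sub h1)
      (fun s _ => by simp only [Pi.sub_apply]; ring) measurableSet_Ioi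
  have hW0 : 0 ≤ W := setIntegral_nonneg measurableSet_Ioi fun x _ => hfnonneg _
  -- splitting the area integral
  have hIio : ∀ ψ : ℝ → ℝ, (∀ x, x < 0 → ψ x = 0) → (∫ x in Iio (0:ℝ), ψ x) = 0 := by
    intro ψ hψ
    rw [setIntegral_congr_fun measurableSet_Iio (fun x hx => hψ x hx)]
    exact integral_zero _ _
  have htrap : (∫ x in Icc (0:ℝ) c1, f x) = c1 * (c0 + c2) / 2 := by
    rw [setIntegral_congr_fun measurableSet_Icc
      (fun x hx => hfI x hx.1 hx.2)]
    rw [MeasureTheory.integral_Icc_eq_integral_Ioc,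
      ← intervalIntegral.integral_of_le hc1.le]
    simp only [hLdef]
    rw [intervalIntegral.integral_add
      (Continuous.intervalIntegrable (by fun_prop) _ _)
      intervalIntegrable_const,
      intervalIntegral.integral_const_mul, integral_id,
      intervalIntegral.integral_const]
    field_simp
    ring
  have hsplitIci : ∀ ψ : ℝ → ℝ, Integrable ψ volume →
      (∫ x in Ici (0:ℝ), ψ x) = (∫ x in Icc (0:ℝ) c1, ψ x) + ∫ x in Ioi c1, ψ x := by
    intro ψ hψ
    rw [← Icc_union_Ioi_eq_Ici hc1.le]
    refine setIntegral_union ?_ measurableSet_Ioi hψ.integrableOn hψ.integrableOn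
    rw [Set.disjoint_left]
    intro x hx hx'
    exact absurd hx.2 (not_le.2 hx')
  have hWV : V = c1 * (c0 + c2) / 2 + W := by
    have h1 : (∫ x : ℝ, f x) = (∫ x in Iio (0:ℝ), f x) + ∫ x in Ici (0:ℝ), f x :=
      (intervalIntegral.integral_Iio_add_Ici hfInt.integrableOn hfInt.integrableOn).symm
    have h2 : (∫ x in Iio (0:ℝ), f x) = 0 :=
      hIio f fun x hx => hf0 x (by rw [hneg x hx]; simp)
    have h3 : (∫ x in Ioi c1, f x) = W := by rw [hshift f, hWdef]
    rw [hVint] at h1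
    rw [h2, hsplitIci f hfInt, htrap, h3] at h1
    linarith
  have hmom2 : (∫ x : ℝ, x * f x) =
      c1 ^ 2 * (c0 + 2 * c2) / 6 + c1 * W + ∫ s in Ioi (0:ℝ), s * g s := by
    have h1 : (∫ x : ℝ, x * f x) = (∫ x in Iio (0:ℝ), x * f x)
        + ∫ x in Ici (0:ℝ), x * f x :=
      (intervalIntegral.integral_Iio_add_Ici hmomInt.integrableOn hmomInt.integrableOn).symm
    have h2 : (∫ x in Iio (0:ℝ), x * f x) = 0 :=
      hIio _ fun x hx => by rw [hf0 x (by rw [hneg x hx]; simp), mul_zero]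
    have h3 : (∫ x in Icc (0:ℝ) c1, x * f x) = c1 ^ 2 * (c0 + 2 * c2) / 6 := by
      rw [setIntegral_congr_fun measurableSet_Icc
        (fun x hx => by rw [hfI x hx.1 hx.2])]
      rw [MeasureTheory.integral_Icc_eq_integral_Ioc,
        ← intervalIntegral.integral_of_le hc1.le]
      have he : ∀ x : ℝ, x * L x = (c2 - c0) / c1 * x ^ 2 + c0 * x := by
        intro x; simp only [hLdef]; ring
      rw [intervalIntegral.integral_congr (fun x _ => he x)]
      rw [intervalIntegral.integral_add
        (Continuous.intervalIntegrable (by fun_prop) _ _)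
        (Continuous.intervalIntegrable (by fun_prop) _ _),
        intervalIntegral.integral_const_mul, intervalIntegral.integral_const_mul,
        integral_pow, integral_id]
      field_simp
      ring
    have h4 : (∫ x in Ioi c1, x * f x) = c1 * W + ∫ s in Ioi (0:ℝ), s * g s := by
      rw [hshift (fun x => x * f x)]
      have he : ∀ s : ℝ, (c1 + s) * f (c1 + s) = c1 * g s + s * g s := by
        intro s; simp only [hgdef]; ring
      rw [setIntegral_congr_fun measurableSet_Ioi (fun s _ => he s)]
      rw [integral_add (hgInt.const_mul c1) hsgInt, integral_const_mul]
    rw [h2, hsplitIci _ hmomInt, h3, h4] at h1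
    linarith
  -- W dominates the triangle area
  have hMW : c2 * M / 2 ≤ W := by
    rcases eq_or_lt_of_le hM0 with hM | hM
    · rw [← hM]; simpa using hW0
    · have hlow : ∀ s ∈ Ioc (0:ℝ) M, (1 - s / M) * c2 ≤ g s := by
        intro s hs
        have hch := chord s M hs.1.le hs.2 hM le_rfl
        have h2 : 0 ≤ s / M * f (c1 + M) :=
          mul_nonneg (div_nonneg hs.1.le hM0) (hfnonneg _)
        simp only [hgdef]
        linarith
      have h1 : (∫ s in Ioc (0:ℝ) M, (1 - s / M) * c2) ≤ ∫ s in Ioc (0:ℝ) M, g s :=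
        setIntegral_mono_on (Continuous.integrableOn_Ioc (by fun_prop))
          (hgInt.mono_set Ioc_subset_Ioi_self) measurableSet_Ioc hlow
      have h2 : (∫ s in Ioc (0:ℝ) M, g s) ≤ W :=
        setIntegral_mono_set hgInt
          (Filter.Eventually.of_forall fun s => hfnonneg _)
          (HasSubset.Subset.eventuallyLE Ioc_subset_Ioi_self)
      have h3 : (∫ s in Ioc (0:ℝ) M, (1 - s / M) * c2) = c2 * M / 2 := by
        rw [← intervalIntegral.integral_of_le hM0]
        have he : ∀ s : ℝ, (1 - s / M) * c2 = c2 - c2 / M * s := by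
          intro s; field_simp
        rw [intervalIntegral.integral_congr fun s _ => he s]
        rw [intervalIntegral.integral_sub intervalIntegrable_const
          (Continuous.intervalIntegrable (by fun_prop) _ _),
          intervalIntegral.integral_const_mul, integral_id,
          intervalIntegral.integral_const]
        field_simp
        ring
      linarith
  set h : ℝ := 2 * W / c2 with hhdef
  have hh0 : 0 ≤ h := div_nonneg (by linarith) hc2.le
  have hg0' : ∀ s, M < s → g s = 0 := fun s hs =>
    hf0 _ (by rw [hempty_gt s hs]; simp)
  have hGW : (∫ s in Ioi (0:ℝ), g s) = W := hWdef.symm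
  have hg00 : g 0 = c2 := by simp only [hgdef]; rw [add_zero, hfc1]
  have chord' : ∀ s u, 0 ≤ s → s ≤ u → 0 < u → u ≤ M →
      (1 - s / u) * c2 + s / u * g u ≤ g s := fun s u a b c d => by
    simpa only [hgdef] using chord s u a b c d
  clear_value sl f g M W h
  have hKEY : (∫ s in Ioi (0:ℝ), s * g s) ≤ c2 * h ^ 2 / 6 := by
    rcases eq_or_lt_of_le hM0 with hMz | hMz
    · have hz : ∀ s ∈ Ioi (0:ℝ), s * g s = 0 := by
        intro s hs
        rw [mem_Ioi] at hs
        rw [hg0' s (by rw [← hMz]; exact hs), mul_zero]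
      rw [setIntegral_congr_fun measurableSet_Ioi hz, integral_zero]
      positivity
    · have hMh : M ≤ h := by
        rw [hhdef, le_div_iff₀ hc2]
        linarith
      have hhpos : 0 < h := lt_of_lt_of_le hMz hMh
      set T : ℝ → ℝ := fun s => c2 * max (1 - s / h) 0 with hTdef
      have hT0 : T 0 = c2 := by simp [hTdef]
      have hTnn : ∀ s, 0 ≤ T s := fun s => mul_nonneg hc2.le (le_max_right _ _)
      have hTle : ∀ s, s ≤ h → T s = c2 * (1 - s / h) := by
        intro s hsh
        rw [hTdef]
        simp only
        rw [max_eq_left]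
        rw [sub_nonneg]
        exact (div_le_one hhpos).2 hsh
      have hTgt : ∀ s, h ≤ s → T s = 0 := by
        intro s hsh
        rw [hTdef]; simp only
        rw [max_eq_right, mul_zero]
        rw [sub_nonpos]
        exact (one_le_div hhpos).2 hsh
      set S : Set ℝ := {s : ℝ | 0 ≤ s ∧ s ≤ M ∧ T s ≤ g s} with hSdef
      have hS0 : (0:ℝ) ∈ S := by
        refine ⟨le_rfl, hM0, ?_⟩
        rw [hT0, hg00]
      have hSbdd : BddAbove S := ⟨M, fun s hs => hs.2.1⟩
      set a : ℝ := sSup S with hadef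
      have ha0 : 0 ≤ a := le_csSup hSbdd hS0
      have haM : a ≤ M := csSup_le ⟨0, hS0⟩ fun s hs => hs.2.1
      have hpoint : ∀ s, s ∈ Ioi (0:ℝ) → (s - a) * (g s - T s) ≤ 0 := by
        intro s hs
        rw [mem_Ioi] at hs
        by_cases hsM : M < s
        · have h1 : g s = 0 := hg0' s hsM
          have h2 : 0 ≤ s - a := by linarith
          have h3 : 0 ≤ T s - g s := by rw [h1]; linarith [hTnn s]
          exact mul_nonpos_of_nonneg_of_nonpos h2 (by linarith)
        · push_neg at hsM
          by_cases hgT : T s ≤ g s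
          · have h1 : s ≤ a := le_csSup hSbdd ⟨hs.le, hsM, hgT⟩
            exact mul_nonpos_of_nonpos_of_nonneg (by linarith) (by linarith)
          · push_neg at hgT
            have h1 : a ≤ s := by
              refine csSup_le ⟨0, hS0⟩ fun u hu => ?_
              by_contra hus
              push_neg at hus
              obtain ⟨hu0, huM, huT⟩ := hu
              have hupos : 0 < u := hs.trans hus
              have hch : (1 - s / u) * c2 + s / u * g u ≤ g s :=
                chord' s u hs.le hus.le hupos huM
              have hTu : T u = c2 * (1 - u / h) := hTle u (huM.trans hMh)
              have hTs : T s = c2 * (1 - s / h) := hTle s (hsM.trans hMh)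
              have heq : (1 - s / u) * c2 + s / u * (c2 * (1 - u / h))
                  = c2 * (1 - s / h) := by
                have key : s / u * u = s := div_mul_cancel₀ s (ne_of_gt hupos)
                calc (1 - s / u) * c2 + s / u * (c2 * (1 - u / h))
                    = c2 - c2 * (s / u * u) / h := by ring
                  _ = c2 * (1 - s / h) := by rw [key]; ring
              have hsu : 0 ≤ s / u := div_nonneg hs.le hupos.le
              have h5 : s / u * (c2 * (1 - u / h)) ≤ s / u * g u := by
                rw [← hTu]
                exact mul_le_mul_of_nonneg_left huT hsu
              linarith
            exact mul_nonpos_of_nonneg_of_nonpos (by linarith) (by linarith)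
      have hTcont : Continuous T :=
        continuous_const.mul ((continuous_const.sub (continuous_id.div_const h)).max
          continuous_const)
      have hTint : IntegrableOn T (Ioi (0:ℝ)) volume := by
        have h1 : IntegrableOn T (Ioc (0:ℝ) h) volume := hTcont.integrableOn_Ioc
        have hEq : EqOn (fun _ : ℝ => (0:ℝ)) T (Ioi h) := fun s hs =>
          (hTgt s (le_of_lt hs)).symm
        have h2 : IntegrableOn T (Ioi h) volume :=
          (integrableOn_congr_fun hEq measurableSet_Ioi).1 (integrableOn_zero)
        exact (h1.union h2).mono_set Ioi_subset_Ioc_union_Ioi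
      have hsTcont : Continuous fun s => s * T s := continuous_id.mul hTcont
      have hsTint : IntegrableOn (fun s => s * T s) (Ioi (0:ℝ)) volume := by
        have h1 : IntegrableOn (fun s => s * T s) (Ioc (0:ℝ) h) volume :=
          hsTcont.integrableOn_Ioc
        have hEq : EqOn (fun _ : ℝ => (0:ℝ)) (fun s => s * T s) (Ioi h) := fun s hs => by
          simp only [hTgt s (le_of_lt hs), mul_zero]
        have h2 : IntegrableOn (fun s => s * T s) (Ioi h) volume :=
          (integrableOn_congr_fun hEq measurableSet_Ioi).1 (integrableOn_zero)
        exact (h1.union h2).mono_set Ioi_subset_Ioc_union_Ioi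
      have hdisj : Disjoint (Ioc (0:ℝ) h) (Ioi h) := by
        rw [Set.disjoint_left]
        intro x hx hx'
        exact absurd hx.2 (not_le.2 hx')
      have hTW : (∫ s in Ioi (0:ℝ), T s) = W := by
        rw [← Ioc_union_Ioi_eq_Ioi hh0,
          setIntegral_union hdisj measurableSet_Ioi hTcont.integrableOn_Ioc
            ((integrableOn_congr_fun (fun s hs => (hTgt s (le_of_lt hs)).symm)
              measurableSet_Ioi).1 integrableOn_zero)]
        have hz : (∫ s in Ioi h, T s) = 0 := by
          rw [setIntegral_congr_fun measurableSet_Ioi fun s hs => hTgt s (le_of_lt hs)]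
          exact integral_zero _ _
        have hm : (∫ s in Ioc (0:ℝ) h, T s) = c2 * h / 2 := by
          rw [setIntegral_congr_fun measurableSet_Ioc fun s hs => hTle s hs.2]
          rw [← intervalIntegral.integral_of_le hh0]
          have he : ∀ s : ℝ, c2 * (1 - s / h) = c2 - c2 / h * s := by
            intro s; ring
          rw [intervalIntegral.integral_congr fun s _ => he s]
          rw [intervalIntegral.integral_sub intervalIntegrable_const
            (Continuous.intervalIntegrable (by fun_prop) _ _),
            intervalIntegral.integral_const_mul, integral_id,
            intervalIntegral.integral_const]
          field_simp
          ring
        rw [hz, hm, hhdef]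
        field_simp
        ring
      have hsTW : (∫ s in Ioi (0:ℝ), s * T s) = c2 * h ^ 2 / 6 := by
        rw [← Ioc_union_Ioi_eq_Ioi hh0,
          setIntegral_union hdisj measurableSet_Ioi hsTcont.integrableOn_Ioc
            ((integrableOn_congr_fun (fun s hs => by
              simp only [hTgt s (le_of_lt hs), mul_zero] :
                EqOn (fun _ : ℝ => (0:ℝ)) (fun s => s * T s) (Ioi h))
              measurableSet_Ioi).1 integrableOn_zero)]
        have hz : (∫ s in Ioi h, s * T s) = 0 := by
          have hEq2 : EqOn (fun s : ℝ => s * T s) (fun _ : ℝ => (0:ℝ)) (Ioi h) :=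
            fun s hs => by simp only [hTgt s (le_of_lt hs), mul_zero]
          rw [setIntegral_congr_fun measurableSet_Ioi hEq2]
          exact integral_zero _ _
        have hm : (∫ s in Ioc (0:ℝ) h, s * T s) = c2 * h ^ 2 / 6 := by
          have hEq3 : EqOn (fun s : ℝ => s * T s)
              (fun s : ℝ => s * (c2 * (1 - s / h))) (Ioc 0 h) :=
            fun s hs => by
              show s * T s = s * (c2 * (1 - s / h))
              rw [hTle s hs.2]
          rw [setIntegral_congr_fun measurableSet_Ioc hEq3]
          rw [← intervalIntegral.integral_of_le hh0]
          have he : ∀ s : ℝ, s * (c2 * (1 - s / h)) = c2 * s - c2 / h * s ^ 2 := by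
            intro s; ring
          rw [intervalIntegral.integral_congr fun s _ => he s]
          rw [intervalIntegral.integral_sub
            (Continuous.intervalIntegrable (by fun_prop) _ _)
            (Continuous.intervalIntegrable (by fun_prop) _ _),
            intervalIntegral.integral_const_mul, integral_id,
            intervalIntegral.integral_const_mul, integral_pow]
          field_simp
          ring
        rw [hz, hm]
        ring
      have hcross : (∫ s in Ioi (0:ℝ), (s - a) * (g s - T s)) ≤ 0 :=
        setIntegral_nonpos measurableSet_Ioi hpoint
      have hexpand : (∫ s in Ioi (0:ℝ), (s - a) * (g s - T s))
          = (∫ s in Ioi (0:ℝ), s * g s) - (∫ s in Ioi (0:ℝ), s * T s)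
            - a * ((∫ s in Ioi (0:ℝ), g s) - (∫ s in Ioi (0:ℝ), T s)) := by
        have he : ∀ s : ℝ, (s - a) * (g s - T s)
            = (s * g s - s * T s) - a * (g s - T s) := fun s => by ring
        have e1 : (∫ s in Ioi (0:ℝ), ((s * g s - s * T s) - a * (g s - T s)))
            = (∫ s in Ioi (0:ℝ), (s * g s - s * T s))
              - ∫ s in Ioi (0:ℝ), a * (g s - T s) :=
          integral_sub (hsgInt.sub hsTint) ((hgInt.sub hTint).const_mul a)
        have e2 : (∫ s in Ioi (0:ℝ), (s * g s - s * T s))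
            = (∫ s in Ioi (0:ℝ), s * g s) - ∫ s in Ioi (0:ℝ), s * T s :=
          integral_sub hsgInt hsTint
        have e3 : (∫ s in Ioi (0:ℝ), a * (g s - T s))
            = a * ∫ s in Ioi (0:ℝ), (g s - T s) := integral_const_mul a _
        have e4 : (∫ s in Ioi (0:ℝ), (g s - T s))
            = (∫ s in Ioi (0:ℝ), g s) - ∫ s in Ioi (0:ℝ), T s :=
          integral_sub hgInt hTint
        rw [setIntegral_congr_fun measurableSet_Ioi fun s _ => he s, e1, e2, e3, e4]
      rw [hexpand, hTW, hsTW, hGW] at hcross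
      linarith
  -- conclusion
  have hfinal : (∫ p in O, p.1 ∂volume)
      ≤ (c0 ^ 2 * c1 ^ 2 - 4 * c0 * c1 * V + 2 * c1 * c2 * V + 4 * V ^ 2)
        / (6 * c2) := by
    rw [hmom, hmom2]
    have hW : W = V - c1 * (c0 + c2) / 2 := by linarith
    have halg : c1 ^ 2 * (c0 + 2 * c2) / 6 + c1 * W + c2 * h ^ 2 / 6
        = (c0 ^ 2 * c1 ^ 2 - 4 * c0 * c1 * V + 2 * c1 * c2 * V + 4 * V ^ 2)
          / (6 * c2) := by
      rw [hhdef, hW]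
      field_simp
      ring
    linarith
  rw [hb1, ← div_div]
  exact (div_le_div_iff_of_pos_right hV).2 hfinal
end

section
/- Let n ≥ 3 and let k, a_{n+1}, r be integers with a_{n+1} ≥ 2, k ≥ 2, r ∈ {0, 1, a_n}, 1 < a_n ≤ a_{n+1}, and d = k·a_{n+1} + r. Assume d + 1 = n + a_n + a_{n+1} (index-1 condition for X_d ⊂ ℙ(1^n, a_n, a_{n+1})). Then (n+1)·a_n ≥ d, and equality holds only if a_n = 2, k = 2, r = 0 and a_{n+1} = n + 1. -/
/-- Numerical lemma for index-1 quasi-smooth Fano hypersurfaces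
`X_d ⊂ ℙ(1^n, aₙ, aₙ₊₁)`: with `n ≥ 3`, `1 < aₙ ≤ aₙ₊₁`, `k ≥ 2`,
`r ∈ {0, 1, aₙ}`, `d = k·aₙ₊₁ + r` and `d + 1 = n + aₙ + aₙ₊₁`,
one has `(n+1)·aₙ ≥ d`, with equality only if `aₙ = 2`, `k = 2`, `r = 0`
and `aₙ₊₁ = n + 1`. -/
theorem stmt8 (n an an1 k r d : ℤ) (hn : 3 ≤ n)
    (han : 1 < an) (h2 : an ≤ an1) (han1 : 2 ≤ an1) (hk : 2 ≤ k)
    (hr : r = 0 ∨ r = 1 ∨ r = an)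
    (hd : d = k * an1 + r) (hidx : d + 1 = n + an + an1) :
    (n + 1) * an ≥ d ∧
    ((n + 1) * an = d → an = 2 ∧ k = 2 ∧ r = 0 ∧ an1 = n + 1) := by
  have hd2 : 2 * an1 ≤ d := by
    rcases hr with h | h | h <;> subst h <;> nlinarith
  have key : (n + 1) * an - d = (an - 1) * (d - 2 * an1) + (an - 2) * (an1 - an) := by
    have hn1 : n + 1 = d + 2 - an - an1 := by linarith
    rw [hn1]; ring
  have t1 : 0 ≤ (an - 1) * (d - 2 * an1) :=
    mul_nonneg (by linarith) (by linarith)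
  have t2 : 0 ≤ (an - 2) * (an1 - an) :=
    mul_nonneg (by linarith) (by linarith)
  refine ⟨by linarith, fun heq => ?_⟩
  have h1 : (an - 1) * (d - 2 * an1) = 0 := by linarith
  have h2' : (an - 2) * (an1 - an) = 0 := by linarith
  have hdeq : d = 2 * an1 := by
    rcases mul_eq_zero.mp h1 with h | h
    · linarith
    · linarith
  -- determine k and r
  have hkr : k = 2 ∧ r = 0 := by
    rcases hr with h | h | h <;> subst h <;> constructor <;> nlinarith
  obtain ⟨hk2, hr0⟩ := hkr
  -- now an1 = n + an - 1
  have han1eq : an1 = n + an - 1 := by linarith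
  have hane : an = 2 := by
    rcases mul_eq_zero.mp h2' with h | h
    · linarith
    · linarith
  exact ⟨hane, hk2, hr0, by linarith⟩
end

section
/- Let n ≥ 3 and let a_n, a_{n+1}, k, r be integers with 1 < a_n ≤ a_{n+1}, k ≥ 2, r ∈ {1, a_n} (so a_{n+1} does not divide d), d = k·a_{n+1} + r, and d + 1 = n + a_n + a_{n+1}. Then (n+1)·a_n/d ≥ (n+1)/(n + 1/a_n), i.e., a_n·(n·a_n + 1) ≥ d·a_n, equivalently 1 + a_n·((k−1)a_{n+1} − a_n + r + 1) ≥ k·a_{n+1} + r. -/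
/-- Numerical refinement for index-1 quasi-smooth Fano hypersurfaces
`X_d ⊂ ℙ(1^n, aₙ, aₙ₊₁)` when `aₙ₊₁ ∤ d` (so `r ∈ {1, aₙ}`): one has
`(n+1)aₙ/d ≥ (n+1)/(n + 1/aₙ)`, i.e. `aₙ(n·aₙ + 1) ≥ d·aₙ`, equivalently
`1 + aₙ((k−1)aₙ₊₁ − aₙ + r + 1) ≥ k·aₙ₊₁ + r`. -/
theorem stmt9 (n an an1 k r d : ℤ) (hn : 3 ≤ n)
    (han : 1 < an) (h2 : an ≤ an1) (hk : 2 ≤ k)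
    (hr : r = 1 ∨ r = an)
    (hd : d = k * an1 + r) (hidx : d + 1 = n + an + an1) :
    ((n + 1) * an : ℝ) / d ≥ ((n : ℝ) + 1) / ((n : ℝ) + 1 / an) ∧
    an * (n * an + 1) ≥ d * an ∧
    1 + an * ((k - 1) * an1 - an + r + 1) ≥ k * an1 + r := by
  have h3 : 1 + an * ((k - 1) * an1 - an + r + 1) ≥ k * an1 + r := by
    rcases hr with h | h <;> rw [h] <;>
      nlinarith [mul_nonneg (sub_nonneg.2 h2) (by nlinarith : (0:ℤ) ≤ (k-1)*an - k),
        mul_nonneg (by linarith : (0:ℤ) ≤ an - 2) (by linarith : (0:ℤ) ≤ k - 2)]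
  have key : n * an + 1 - d =
      (1 + an * ((k - 1) * an1 - an + r + 1)) - (k * an1 + r) := by
    have hn' : n = d + 1 - an - an1 := by linarith
    subst hn' hd; ring
  have hnd : n * an + 1 ≥ d := by linarith
  have h2' : an * (n * an + 1) ≥ d * an := by nlinarith [hnd, han]
  have hdpos : (0:ℤ) < d := by nlinarith
  refine ⟨?_, h2', h3⟩
  have hanR : (1:ℝ) < (an:ℝ) := by exact_mod_cast han
  have hdR : (0:ℝ) < (d:ℝ) := by exact_mod_cast hdpos
  have hnR : (3:ℝ) ≤ (n:ℝ) := by exact_mod_cast hn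
  have hpos2 : (0:ℝ) < (n:ℝ) + 1 / an := by positivity
  rw [ge_iff_le, div_le_div_iff₀ hpos2 hdR]
  have hndR : (n:ℝ) * an + 1 ≥ d := by exact_mod_cast hnd
  have h1an : (1:ℝ)/an * an = 1 := by field_simp
  nlinarith [mul_le_mul_of_nonneg_left hndR (by linarith : (0:ℝ) ≤ (n:ℝ)+1)]
end

section
/- Let n ≥ 3, and let c_1, a_{c_1}, …, a_{n+1}, d, k be integers with (n+2)/2 ≤ c_1 ≤ n, 2 ≤ a_{c_1} ≤ … ≤ a_{n+1}, d = c_1 + ∑_{i=c_1}^{n+1} a_i − 1, d = k·a_{n+1} + 1 with k ≥ 2, and d ≥ (n+1)·a_n (where a_n is the second-largest weight). If furthermore for each i with c_1 ≤ i ≤ n+1 there is k_i ≥ 2 with d = k_i·a_i + 1 (so in particular a_{c_1} = … = a_n all satisfy d ≡ 1 mod a_i), then assuming k = 2 one has d ≤ n² − 1 < n². -/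
/-- Numerical core (case `k = 2`) of the Lemma in Section 8: for an index-1
quasi-smooth Fano hypersurface of degree `d` in
`ℙ(1^{c₁}, a_{c₁}, …, a_{n+1})` with `(n+2)/2 ≤ c₁ ≤ n`,
`2 ≤ a_{c₁} ≤ … ≤ a_{n+1}`, `d = c₁ + ∑ aᵢ − 1`, `d = k·a_{n+1} + 1` with
`k = 2`, `d ≥ (n+1)·aₙ`, and `d ≡ 1 mod aᵢ` with quotient `≥ 2` for each `i`,
one has `d ≤ n² − 1 < n²`. -/
theorem stmt11 (n c1 k d : ℤ) (a : ℤ → ℤ) (hn : 3 ≤ n)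
    (hc1l : n + 2 ≤ 2 * c1) (hc1u : c1 ≤ n)
    (ha2 : 2 ≤ a c1)
    (hmono : ∀ i j : ℤ, c1 ≤ i → i ≤ j → j ≤ n + 1 → a i ≤ a j)
    (hd : d = c1 + (∑ i ∈ Finset.Icc c1 (n + 1), a i) - 1)
    (hk : d = k * a (n + 1) + 1) (hk2 : 2 ≤ k)
    (hdn : d ≥ (n + 1) * a n)
    (hdiv : ∀ i : ℤ, c1 ≤ i → i ≤ n + 1 → ∃ ki : ℤ, 2 ≤ ki ∧ d = ki * a i + 1)
    (hkeq : k = 2) :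
    d ≤ n ^ 2 - 1 ∧ n ^ 2 - 1 < n ^ 2 := by
  have hsplit : (∑ i ∈ Finset.Icc c1 (n + 1), a i)
      = (∑ i ∈ Finset.Icc c1 n, a i) + a (n + 1) := by
    rw [show Finset.Icc c1 (n + 1) = insert (n + 1) (Finset.Icc c1 n) by
        ext x; simp [Finset.mem_Icc]; omega, Finset.sum_insert (by simp)]
    ring
  have hbound : (∑ i ∈ Finset.Icc c1 n, a i) ≤ (n - c1 + 1) * a n := by
    calc (∑ i ∈ Finset.Icc c1 n, a i) ≤ ∑ _i ∈ Finset.Icc c1 n, a n := by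
          refine Finset.sum_le_sum fun i hi => ?_
          rw [Finset.mem_Icc] at hi
          exact hmono i n hi.1 hi.2 (by linarith)
      _ = (n - c1 + 1) * a n := by
          rw [Finset.sum_const, Int.card_Icc, nsmul_eq_mul,
            Int.toNat_of_nonneg (by linarith)]
          ring_nf
  -- d ≤ c1 + (n - c1 + 1) * a n + a (n+1) - 1, with d = 2 * a(n+1) + 1
  subst hkeq
  have h1 : 2 * d ≤ 2 * c1 + 2 * (n - c1 + 1) * a n + (d - 1) - 2 := by
    linarith
  -- multiply through by (n+1) and use (n+1) * a n ≤ d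
  have h2 : (2 * c1 - n - 1) * d ≤ (n + 1) * (2 * c1 - 3) := by
    nlinarith [mul_nonneg (by linarith : (0:ℤ) ≤ 2 * (n - c1 + 1))
      (by linarith : (0:ℤ) ≤ d - (n + 1) * a n)]
  refine ⟨?_, by linarith⟩
  by_contra hcon
  push_neg at hcon
  have hd2 : n ^ 2 ≤ d := by linarith [Int.lt_iff_add_one_le.mp hcon]
  have hm1 : (0:ℤ) ≤ 2 * c1 - n - 2 := by linarith
  nlinarith [h2, mul_nonneg hm1 (sub_nonneg.2 hd2),
    mul_nonneg hm1 (by nlinarith : (0:ℤ) ≤ n ^ 2 - n - 1)]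
end

section
/- Let n ≥ 2 and a, k ≥ 1 be integers. Consider the region 𝔻 ⊂ ℝ^n_{>0} given as the union of 𝔻₁ = {x : x_1 ≤ 1/a and x_2 + … + x_n < a·x_1} and 𝔻₂ = {x : 1/a < x_1 < (ak+1)/a and x_2 + … + x_n < (1/k)·((ak+1)/a − x_1)}. Then (n!·a/(ak+1))·∫_𝔻 x_1 dx = (ak+n)/(a(n+1)), and for 2 ≤ j ≤ n, (n!·a/(ak+1))·∫_𝔻 x_j dx = 1/(n+1). -/
open MeasureTheory Set

namespace Stmt15Aux

/-- open simplex of size `c` in `ℝ^m_{>0}` -/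
def Spx (m : ℕ) (c : ℝ) : Set (Fin m → ℝ) := {y | (∀ i, 0 < y i) ∧ ∑ i, y i < c}

lemma measurableSet_Spx (m : ℕ) (c : ℝ) : MeasurableSet (Spx m c) := by
  have : Spx m c = (⋂ i, {y : Fin m → ℝ | 0 < y i}) ∩ {y | ∑ i, y i < c} := by
    ext y; simp [Spx]
  rw [this]
  exact (MeasurableSet.iInter fun i =>
      measurableSet_lt measurable_const (measurable_pi_apply i)).inter
    (measurableSet_lt (Finset.measurable_sum _ fun i _ => measurable_pi_apply i) measurable_const)

lemma measurableSet_SpxPair (m : ℕ) :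
    MeasurableSet {p : ℝ × (Fin m → ℝ) | p.2 ∈ Spx m p.1} := by
  have : {p : ℝ × (Fin m → ℝ) | p.2 ∈ Spx m p.1}
      = (⋂ i, {p : ℝ × (Fin m → ℝ) | 0 < p.2 i}) ∩ {p | ∑ i, p.2 i < p.1} := by
    ext p; simp [Spx]
  rw [this]
  refine (MeasurableSet.iInter fun i => measurableSet_lt
    (measurable_const : Measurable fun _ : ℝ × (Fin m → ℝ) => (0:ℝ))
    ((measurable_pi_apply i).comp measurable_snd)).inter
    (measurableSet_lt (Finset.measurable_sum _ fun i _ =>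
      (measurable_pi_apply i).comp measurable_snd) measurable_fst)

def Dset (m : ℕ) (R : ℝ → ℝ) : Set (Fin (m + 1) → ℝ) :=
  {x | 0 < x 0 ∧ Fin.tail x ∈ Spx m (R (x 0))}

lemma measurableSet_Dset (m : ℕ) {R : ℝ → ℝ} (hR : Measurable R) :
    MeasurableSet (Dset m R) := by
  have h1 : Measurable fun x : Fin (m+1) → ℝ => (R (x 0), Fin.tail x) := by
    refine (hR.comp (measurable_pi_apply 0)).prodMk ?_
    exact measurable_pi_iff.2 fun i => measurable_pi_apply _
  have : Dset m R = {x : Fin (m+1) → ℝ | 0 < x 0} ∩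
      (fun x : Fin (m+1) → ℝ => (R (x 0), Fin.tail x)) ⁻¹' {p | p.2 ∈ Spx m p.1} := by
    ext x; simp [Dset]
  rw [this]
  exact (measurableSet_lt measurable_const (measurable_pi_apply 0)).inter
    (h1 (measurableSet_SpxPair m))

lemma lintegral_Dset (m : ℕ) {R : ℝ → ℝ} (hR : Measurable R)
    {g : ℝ → (Fin m → ℝ) → ENNReal} (hg : Measurable (Function.uncurry g)) :
    ∫⁻ x in Dset m R, g (x 0) (Fin.tail x) ∂volume
      = ∫⁻ t in Ioi (0:ℝ), ∫⁻ y in Spx m (R t), g t y ∂volume ∂volume := by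
  set T : Set (ℝ × (Fin m → ℝ)) := {p | 0 < p.1 ∧ p.2 ∈ Spx m (R p.1)} with hT_def
  have hT : MeasurableSet T := by
    have : T = {p : ℝ × (Fin m → ℝ) | 0 < p.1} ∩
        (fun p : ℝ × (Fin m → ℝ) => (R p.1, p.2)) ⁻¹' {p | p.2 ∈ Spx m p.1} := by
      ext p; simp [hT_def]
    rw [this]
    exact (measurableSet_lt measurable_const measurable_fst).inter
      (((hR.comp measurable_fst).prodMk measurable_snd) (measurableSet_SpxPair m))
  rw [← lintegral_indicator (measurableSet_Dset m hR)]
  rw [((volume_preserving_piFinSuccAbove (fun _ : Fin (m+1) => ℝ) 0).symm _).lintegral_map_equiv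
    ((Dset m R).indicator fun x => g (x 0) (Fin.tail x))]
  have key : ∀ p : ℝ × (Fin m → ℝ),
      (Dset m R).indicator (fun x => g (x 0) (Fin.tail x))
        ((MeasurableEquiv.piFinSuccAbove (fun _ : Fin (m+1) => ℝ) 0).symm p)
      = T.indicator (Function.uncurry g) p := by
    rintro ⟨t, y⟩
    have hsymm : (MeasurableEquiv.piFinSuccAbove (fun _ : Fin (m+1) => ℝ) 0).symm (t, y)
        = Fin.cons t y := by
      simp [MeasurableEquiv.piFinSuccAbove, Fin.insertNthEquiv, Fin.insertNth_zero']
    rw [hsymm]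
    by_cases ht : (0:ℝ) < t <;> by_cases hy : y ∈ Spx m (R t) <;>
      simp [Set.indicator_apply, Dset, Fin.tail_cons, ht, hy, hT_def, Function.uncurry]
  simp_rw [key]
  rw [Measure.volume_eq_prod, lintegral_prod _ (hg.indicator hT).aemeasurable]
  rw [← lintegral_indicator measurableSet_Ioi]
  congr 1
  funext t
  by_cases ht : (0:ℝ) < t
  · rw [Set.indicator_of_mem (mem_Ioi.2 ht), ← lintegral_indicator (measurableSet_Spx m (R t))]
    congr 1
    funext y
    by_cases hy : y ∈ Spx m (R t) <;>
      simp [Set.indicator_apply, ht, hy, hT_def, Function.uncurry]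
  · rw [Set.indicator_of_notMem (by simpa using ht)]
    have hz : ∀ y : Fin m → ℝ, T.indicator (Function.uncurry g) (t, y) = 0 := by
      intro y
      apply Set.indicator_of_notMem
      rintro ⟨h1, -⟩
      exact ht h1
    simp_rw [hz]
    simp

end Stmt15Aux

namespace Stmt15Aux2
open Stmt15Aux

lemma lint_Ioo {f : ℝ → ℝ} (hf : Continuous f) {a b : ℝ} (hab : a ≤ b)
    (hpos : ∀ t ∈ Ioo a b, 0 ≤ f t) :
    ∫⁻ t in Ioo a b, ENNReal.ofReal (f t) ∂volume = ENNReal.ofReal (∫ t in a..b, f t) := by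
  rw [intervalIntegral.integral_of_le hab, MeasureTheory.integral_Ioc_eq_integral_Ioo]
  exact (ofReal_integral_eq_lintegral_ofReal
    ((hf.continuousOn.integrableOn_Icc).mono_set Ioo_subset_Icc_self)
    ((ae_restrict_iff' measurableSet_Ioo).2 (ae_of_all _ hpos))).symm

lemma lint_main (c : ℝ) {f : ℝ → ℝ} (hf : Continuous f) (hpos : ∀ t ∈ Ioo 0 c, 0 ≤ f t) :
    ∫⁻ t in Ioi (0:ℝ), (if 0 < c - t then ENNReal.ofReal (f t) else 0) ∂volume =
      if 0 < c then ENNReal.ofReal (∫ t in (0:ℝ)..c, f t) else 0 := by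
  by_cases hc : 0 < c
  · rw [if_pos hc, ← Ioo_union_Ici_eq_Ioi hc, lintegral_union measurableSet_Ici
      (Set.disjoint_left.2 fun t ht hc' => absurd (mem_Ici.1 hc') (not_le.2 ht.2))]
    have h1 : ∫⁻ t in Ioo (0:ℝ) c, (if 0 < c - t then ENNReal.ofReal (f t) else 0) ∂volume
        = ∫⁻ t in Ioo (0:ℝ) c, ENNReal.ofReal (f t) ∂volume :=
      setLIntegral_congr_fun measurableSet_Ioo
        (fun t ht => if_pos (by linarith [ht.2]))
    have h2 : ∫⁻ t in Ici c, (if 0 < c - t then ENNReal.ofReal (f t) else 0) ∂volume = 0 := by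
      have : ∫⁻ t in Ici c, (if 0 < c - t then ENNReal.ofReal (f t) else 0) ∂volume
          = ∫⁻ _ in Ici c, (0:ENNReal) ∂volume :=
        setLIntegral_congr_fun measurableSet_Ici
          (fun t ht => if_neg (by simp only [not_lt]; linarith [mem_Ici.1 ht]))
      rw [this, lintegral_zero]
    rw [h1, h2, lint_Ioo hf hc.le hpos, add_zero]
  · rw [if_neg hc]
    have : ∫⁻ t in Ioi (0:ℝ), (if 0 < c - t then ENNReal.ofReal (f t) else 0) ∂volume
        = ∫⁻ _ in Ioi (0:ℝ), (0:ENNReal) ∂volume :=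
      setLIntegral_congr_fun measurableSet_Ioi
        (fun t ht => if_neg (by push_neg at hc ⊢; linarith [mem_Ioi.1 ht]))
    rw [this, lintegral_zero]

lemma integral_sub_pow' (M L : ℝ) (q : ℕ) :
    ∫ t in L..M, (M - t)^q = (M - L)^(q+1)/(q+1) := by
  rw [intervalIntegral.integral_comp_sub_left (fun x => x^q) M]
  rw [integral_pow]
  rw [sub_self, zero_pow (by omega)]
  ring

lemma integral_id_mul_sub_pow' (M L : ℝ) (q : ℕ) :
    ∫ t in L..M, t * (M - t)^q
      = M * ((M - L)^(q+1)/(q+1)) - (M - L)^(q+2)/(q+2) := by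
  have h := intervalIntegral.integral_comp_sub_left (a := L) (b := M)
    (fun x => (M - x) * x^q) M
  simp only [sub_sub_cancel] at h
  rw [h, sub_self]
  have e : ∀ x : ℝ, (M - x) * x^q = M * x^q - x^(q+1) := fun x => by ring
  simp_rw [e]
  rw [intervalIntegral.integral_sub (f := fun x : ℝ => M * x^q) ((continuous_const.mul (continuous_pow q)).intervalIntegrable _ _)
    ((continuous_pow (q+1)).intervalIntegrable _ _),
    intervalIntegral.integral_const_mul, integral_pow, integral_pow,
    zero_pow (by omega : q+1 ≠ 0), zero_pow (by omega : q+2 ≠ 0)]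
  push_cast
  ring

lemma Spx_succ_eq_Dset (m : ℕ) (c : ℝ) : Spx (m+1) c = Dset m (fun t => c - t) := by
  ext x
  simp only [Spx, Dset, mem_setOf_eq, Fin.forall_fin_succ, Fin.sum_univ_succ, Fin.tail]
  constructor
  · rintro ⟨⟨h0, hs⟩, hsum⟩; exact ⟨h0, hs, by linarith⟩
  · rintro ⟨h0, hs, hsum⟩; exact ⟨⟨h0, hs⟩, by linarith⟩

lemma Spx_volume : ∀ (m : ℕ) (c : ℝ),
    volume (Spx m c) = if 0 < c then ENNReal.ofReal (c^m / m.factorial) else 0 := by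
  intro m
  induction m with
  | zero =>
    intro c
    by_cases hc : 0 < c
    · have h : Spx 0 c = univ := by ext y; simp [Spx, hc]
      rw [h, if_pos hc]
      rw [MeasureTheory.volume_pi, Measure.pi_empty_univ]
      simp
    · have h : Spx 0 c = ∅ := by
        ext y; simp only [Spx, mem_setOf_eq, mem_empty_iff_false, iff_false]
        rintro ⟨-, hs⟩
        simp at hs
        exact hc hs
      rw [h, if_neg hc]
      simp
  | succ m ih =>
    intro c
    rw [Spx_succ_eq_Dset]
    have h := lintegral_Dset m (R := fun t => c - t)
      (measurable_const.sub measurable_id) (g := fun _ _ => (1:ENNReal)) measurable_const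
    simp only [setLIntegral_one] at h
    rw [h]
    simp_rw [ih]
    rw [lint_main c (by fun_prop) (fun t ht => div_nonneg (pow_nonneg (by linarith [ht.2]) m)
      (by positivity))]
    by_cases hc : 0 < c
    · rw [if_pos hc, if_pos hc]
      congr 1
      rw [intervalIntegral.integral_div, integral_sub_pow', sub_zero, Nat.factorial_succ]
      have hm : (m.factorial : ℝ) ≠ 0 := Nat.cast_ne_zero.2 m.factorial_ne_zero
      push_cast
      field_simp
    · rw [if_neg hc, if_neg hc]

end Stmt15Aux2

namespace Stmt15Aux3
open Stmt15Aux Stmt15Aux2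

lemma Spx_lint : ∀ (m : ℕ) (c : ℝ) (j : Fin m),
    ∫⁻ y in Spx m c, ENNReal.ofReal (y j) ∂volume
      = if 0 < c then ENNReal.ofReal (c^(m+1) / (m+1).factorial) else 0 := by
  intro m
  induction m with
  | zero => intro c j; exact j.elim0
  | succ m ih =>
    intro c j
    rw [Spx_succ_eq_Dset]
    rcases Fin.eq_zero_or_eq_succ j with hj | ⟨i, hj⟩
    · subst hj
      have h := lintegral_Dset m (R := fun t => c - t) (measurable_const.sub measurable_id)
        (g := fun t _ => ENNReal.ofReal t)
        (ENNReal.measurable_ofReal.comp measurable_fst)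
      rw [h]
      simp_rw [setLIntegral_const, Spx_volume]
      have key : ∫⁻ t in Ioi (0:ℝ), ENNReal.ofReal t *
            (if 0 < c - t then ENNReal.ofReal ((c-t)^m / m.factorial) else 0) ∂volume
          = ∫⁻ t in Ioi (0:ℝ),
            (if 0 < c - t then ENNReal.ofReal (t * ((c-t)^m / m.factorial)) else 0) ∂volume := by
        apply setLIntegral_congr_fun measurableSet_Ioi
        intro t ht
        dsimp only
        by_cases h' : 0 < c - t
        · rw [if_pos h', if_pos h', ← ENNReal.ofReal_mul (le_of_lt (mem_Ioi.1 ht))]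
        · rw [if_neg h', if_neg h', mul_zero]
      rw [key, lint_main c (by fun_prop) (fun t ht => mul_nonneg ht.1.le
        (div_nonneg (pow_nonneg (by linarith [ht.2]) m) (by positivity)))]
      by_cases hc : 0 < c
      · rw [if_pos hc, if_pos hc]
        congr 1
        have e : ∀ t:ℝ, t * ((c - t)^m / m.factorial) = (t * (c-t)^m) / m.factorial :=
          fun t => by ring
        simp_rw [e]
        rw [intervalIntegral.integral_div, integral_id_mul_sub_pow', sub_zero]
        rw [Nat.factorial_succ, Nat.factorial_succ]
        have hm : (m.factorial : ℝ) ≠ 0 := Nat.cast_ne_zero.2 m.factorial_ne_zero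
        have h1 : ((m:ℝ)+1) ≠ 0 := by positivity
        have h2 : ((m:ℝ)+2) ≠ 0 := by positivity
        push_cast
        field_simp
        ring
      · rw [if_neg hc, if_neg hc]
    · subst hj
      have h := lintegral_Dset m (R := fun t => c - t) (measurable_const.sub measurable_id)
        (g := fun _ y => ENNReal.ofReal (y i))
        (ENNReal.measurable_ofReal.comp ((measurable_pi_apply i).comp measurable_snd))
      rw [show (∫⁻ x in Dset m (fun t => c - t), ENNReal.ofReal (x i.succ) ∂volume)
        = ∫⁻ x in Dset m (fun t => c - t), ENNReal.ofReal (Fin.tail x i) ∂volume from rfl, h]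
      simp_rw [ih]
      rw [lint_main c (by fun_prop) (fun t ht => div_nonneg
        (pow_nonneg (by linarith [ht.2]) (m+1)) (by positivity))]
      by_cases hc : 0 < c
      · rw [if_pos hc, if_pos hc]
        congr 1
        rw [intervalIntegral.integral_div, integral_sub_pow', sub_zero, Nat.factorial_succ (m+1)]
        have hm : ((m+1).factorial : ℝ) ≠ 0 := Nat.cast_ne_zero.2 (m+1).factorial_ne_zero
        push_cast
        field_simp
      · rw [if_neg hc, if_neg hc]

end Stmt15Aux3

namespace Stmt15Aux4
open Stmt15Aux Stmt15Aux2 Stmt15Aux3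

lemma lintegral_Ioi_split {u M : ℝ} (hu : 0 < u) (huM : u < M) (F : ℝ → ENNReal)
    (hM : ∀ t, M ≤ t → F t = 0) :
    ∫⁻ t in Ioi (0:ℝ), F t ∂volume
      = (∫⁻ t in Ioo (0:ℝ) u, F t ∂volume) + ∫⁻ t in Ioo u M, F t ∂volume := by
  have d1 : Disjoint (Ioc (0:ℝ) u ∪ Ioo u M) (Ici M) := by
    refine Set.disjoint_left.2 ?_
    rintro t (ht | ht) hM'
    · exact absurd (mem_Ici.1 hM') (not_le.2 (lt_of_le_of_lt ht.2 huM))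
    · exact absurd (mem_Ici.1 hM') (not_le.2 ht.2)
  have d2 : Disjoint (Ioc (0:ℝ) u) (Ioo u M) :=
    Set.disjoint_left.2 fun t ht ht' => absurd ht'.1 (not_lt.2 ht.2)
  have e1 : Ioi (0:ℝ) = (Ioc 0 u ∪ Ioo u M) ∪ Ici M := by
    rw [Ioc_union_Ioo_eq_Ioo hu.le huM, Ioo_union_Ici_eq_Ioi (hu.trans huM)]
  rw [e1, lintegral_union measurableSet_Ici d1, lintegral_union measurableSet_Ioo d2]
  have hz : ∫⁻ t in Ici M, F t ∂volume = ∫⁻ _ in Ici M, (0:ENNReal) ∂volume :=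
    setLIntegral_congr_fun measurableSet_Ici (fun t ht => hM t (mem_Ici.1 ht))
  rw [hz, lintegral_zero, add_zero]
  congr 1
  exact setLIntegral_congr Ioo_ae_eq_Ioc.symm

end Stmt15Aux4

open Stmt15Aux Stmt15Aux2 Stmt15Aux3 Stmt15Aux4

/-- Explicit integral computation at a generalized Eckardt point: with
`n ≥ 2`, `a, k ≥ 1`, and `𝔻 ⊂ ℝⁿ_{>0}` the union of
`{x₁ ≤ 1/a, x₂+…+xₙ < a·x₁}` and
`{1/a < x₁ < (ak+1)/a, x₂+…+xₙ < (1/k)((ak+1)/a − x₁)}`, one has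
`(n!·a/(ak+1))·∫_𝔻 x₁ dx = (ak+n)/(a(n+1))` and, for `j ≥ 2`,
`(n!·a/(ak+1))·∫_𝔻 x_j dx = 1/(n+1)`. -/
theorem stmt15 (n a k : ℕ) (hn : 2 ≤ n) (ha : 1 ≤ a) (hk : 1 ≤ k)
    (D : Set (Fin n → ℝ))
    (hD : D = {x : Fin n → ℝ | (∀ i, 0 < x i) ∧
      ((x ⟨0, by omega⟩ ≤ 1 / (a : ℝ) ∧
          (∑ i ∈ Finset.univ.erase ⟨0, by omega⟩, x i) < (a : ℝ) * x ⟨0, by omega⟩) ∨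
        (1 / (a : ℝ) < x ⟨0, by omega⟩ ∧
          x ⟨0, by omega⟩ < ((a : ℝ) * k + 1) / a ∧
          (∑ i ∈ Finset.univ.erase ⟨0, by omega⟩, x i) <
            (1 / (k : ℝ)) * (((a : ℝ) * k + 1) / a - x ⟨0, by omega⟩)))}) :
    ((n.factorial : ℝ) * a / ((a : ℝ) * k + 1)) *
        (∫ x in D, x ⟨0, by omega⟩ ∂volume)
      = ((a : ℝ) * k + n) / ((a : ℝ) * (n + 1)) ∧
    ∀ j : Fin n, j ≠ ⟨0, by omega⟩ →
      ((n.factorial : ℝ) * a / ((a : ℝ) * k + 1)) *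
          (∫ x in D, x j ∂volume)
        = 1 / ((n : ℝ) + 1) := by
  obtain ⟨m, rfl⟩ : ∃ m, n = m + 1 := ⟨n - 1, by omega⟩
  have hA : (0:ℝ) < a := by exact_mod_cast (by omega : 0 < a)
  have hK : (0:ℝ) < k := by exact_mod_cast (by omega : 0 < k)
  have hA' : (a:ℝ) ≠ 0 := ne_of_gt hA
  have hK' : (k:ℝ) ≠ 0 := ne_of_gt hK
  set u : ℝ := 1 / (a:ℝ) with hu_def
  set M : ℝ := ((a:ℝ) * k + 1) / a with hM_def
  have hu : 0 < u := by rw [hu_def]; positivity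
  have hMu : M - u = (k:ℝ) := by rw [hM_def, hu_def]; field_simp; ring
  have huM : u < M := by have := hK; linarith
  set R : ℝ → ℝ := fun t => if t ≤ u then (a:ℝ) * t else (M - t) / k with hR_def
  have hR : Measurable R := Measurable.ite (measurableSet_le measurable_id measurable_const)
    (measurable_const.mul measurable_id) ((measurable_const.sub measurable_id).div_const _)
  have h0 : (⟨0, by omega⟩ : Fin (m+1)) = 0 := rfl
  have hsum : ∀ x : Fin (m+1) → ℝ,
      (∑ i ∈ Finset.univ.erase (0 : Fin (m+1)), x i) = ∑ i, Fin.tail x i := by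
    intro x
    have h1 : x 0 + ∑ i ∈ Finset.univ.erase (0 : Fin (m+1)), x i = ∑ i, x i :=
      Finset.add_sum_erase _ _ (Finset.mem_univ _)
    have h2 : ∑ i, x i = x 0 + ∑ i, Fin.tail x i := Fin.sum_univ_succ x
    linarith
  have hDeq : D = Dset m R := by
    rw [hD]
    ext x
    simp only [mem_setOf_eq, h0, Dset, Spx, hsum x]
    constructor
    · rintro ⟨hpos, hcase⟩
      refine ⟨hpos 0, fun i => hpos i.succ, ?_⟩
      rcases hcase with ⟨hle, hlt⟩ | ⟨hgt, hltM, hs⟩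
      · simp only [hR_def]
        rw [if_pos hle]
        exact hlt
      · simp only [hR_def]
        rw [if_neg (not_le.2 hgt)]
        have he : (1/(k:ℝ)) * (M - x 0) = (M - x 0)/k := by ring
        linarith
    · rintro ⟨h0x, htail, hsumlt⟩
      refine ⟨fun i => Fin.cases h0x htail i, ?_⟩
      by_cases hx0 : x 0 ≤ u
      · left
        refine ⟨hx0, ?_⟩
        simp only [hR_def] at hsumlt
        rw [if_pos hx0] at hsumlt
        exact hsumlt
      · push_neg at hx0
        right
        simp only [hR_def] at hsumlt
        rw [if_neg (not_le.2 hx0)] at hsumlt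
        have hsn : 0 ≤ ∑ i, Fin.tail x i := Finset.sum_nonneg fun i _ => (htail i).le
        have hpos' : 0 < (M - x 0)/k := lt_of_le_of_lt hsn hsumlt
        have h' : (M - x 0)/k * k = M - x 0 := div_mul_cancel₀ _ hK'
        have hxM : x 0 < M := by
          have := mul_pos hpos' hK
          linarith
        refine ⟨hx0, hxM, ?_⟩
        have he : (1/(k:ℝ)) * (M - x 0) = (M - x 0)/k := by ring
        linarith
  have hDmeas : MeasurableSet D := hDeq ▸ measurableSet_Dset m hR
  have hDpos : ∀ x ∈ D, ∀ i, 0 < x i := fun x hx => by rw [hD] at hx; exact hx.1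
  have key : ∀ j : Fin (m+1), ∫ x in D, x j ∂volume
      = (∫⁻ x in D, ENNReal.ofReal (x j) ∂volume).toReal := by
    intro j
    rw [integral_eq_lintegral_of_nonneg_ae
      ((ae_restrict_mem hDmeas).mono fun x hx => (hDpos x hx j).le)
      (measurable_pi_apply j).aestronglyMeasurable]
  -- nonzero facts for the final algebra
  have hF0 : ((m.factorial : ℕ) : ℝ) ≠ 0 := Nat.cast_ne_zero.2 m.factorial_ne_zero
  have hF1 : (((m+1).factorial : ℕ) : ℝ) ≠ 0 := Nat.cast_ne_zero.2 (m+1).factorial_ne_zero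
  have hm1 : ((m:ℝ)+1) ≠ 0 := by positivity
  have hm2 : ((m:ℝ)+2) ≠ 0 := by positivity
  have hak : (a:ℝ) * k + 1 ≠ 0 := by positivity
  constructor
  · -- first coordinate
    have lint1 : (∫⁻ x in D, ENNReal.ofReal (x 0) ∂volume)
        = ENNReal.ofReal (∫ t in (0:ℝ)..u, t * (((a:ℝ)*t)^m/(m.factorial:ℝ)))
          + ENNReal.ofReal (∫ t in u..M, t * (((M - t)/(k:ℝ))^m/(m.factorial:ℝ))) := by
      rw [hDeq, lintegral_Dset m hR (g := fun t _ => ENNReal.ofReal t)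
        (ENNReal.measurable_ofReal.comp measurable_fst)]
      simp_rw [setLIntegral_const, Spx_volume m]
      rw [lintegral_Ioi_split hu huM _ ?_]
      · congr 1
        · have e1 : ∀ t ∈ Ioo (0:ℝ) u,
              ENNReal.ofReal t * (if 0 < R t then ENNReal.ofReal ((R t)^m/(m.factorial:ℝ)) else 0)
              = ENNReal.ofReal (t * (((a:ℝ)*t)^m/(m.factorial:ℝ))) := by
            intro t ht
            have hRt : R t = (a:ℝ)*t := by simp only [hR_def]; rw [if_pos ht.2.le]
            rw [hRt, if_pos (mul_pos hA ht.1), ← ENNReal.ofReal_mul ht.1.le]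
          rw [setLIntegral_congr_fun measurableSet_Ioo e1]
          exact lint_Ioo (by fun_prop) hu.le fun t ht => mul_nonneg ht.1.le
            (div_nonneg (pow_nonneg (mul_nonneg hA.le ht.1.le) m) (Nat.cast_nonneg _))
        · have e2 : ∀ t ∈ Ioo u M,
              ENNReal.ofReal t * (if 0 < R t then ENNReal.ofReal ((R t)^m/(m.factorial:ℝ)) else 0)
              = ENNReal.ofReal (t * (((M - t)/(k:ℝ))^m/(m.factorial:ℝ))) := by
            intro t ht
            have hRt : R t = (M - t)/k := by simp only [hR_def]; rw [if_neg (not_le.2 ht.1)]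
            rw [hRt, if_pos (div_pos (by linarith [ht.2]) hK),
              ← ENNReal.ofReal_mul (le_of_lt (hu.trans ht.1))]
          rw [setLIntegral_congr_fun measurableSet_Ioo e2]
          exact lint_Ioo (by fun_prop) huM.le fun t ht => mul_nonneg (by linarith [ht.1])
            (div_nonneg (pow_nonneg (div_nonneg (by linarith [ht.2]) hK.le) _) (by positivity))
      · intro t ht
        have hRt : R t = (M - t)/k := by simp only [hR_def]; rw [if_neg (by linarith)]
        rw [hRt, if_neg (by
          apply not_lt.2
          apply div_nonpos_of_nonpos_of_nonneg <;> linarith), mul_zero]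
    have hI1 : 0 ≤ ∫ t in (0:ℝ)..u, t * (((a:ℝ)*t)^m/(m.factorial:ℝ)) :=
      intervalIntegral.integral_nonneg hu.le fun t ht => mul_nonneg ht.1
        (div_nonneg (pow_nonneg (mul_nonneg hA.le ht.1) m) (Nat.cast_nonneg _))
    have hI2 : 0 ≤ ∫ t in u..M, t * (((M - t)/(k:ℝ))^m/(m.factorial:ℝ)) :=
      intervalIntegral.integral_nonneg huM.le fun t ht => mul_nonneg (by linarith [ht.1, hu])
        (div_nonneg (pow_nonneg (div_nonneg (by linarith [ht.2]) hK.le) _) (by positivity))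
    have c3 : (∫ t in (0:ℝ)..u, t * (((a:ℝ)*t)^m/(m.factorial:ℝ)))
        = (a:ℝ)^m * u^(m+2) / ((m.factorial:ℝ) * ((m:ℝ)+2)) := by
      have e : ∀ t:ℝ, t * (((a:ℝ)*t)^m/(m.factorial:ℝ))
          = ((a:ℝ)^m/(m.factorial:ℝ)) * t^(m+1) := fun t => by rw [mul_pow]; ring
      simp_rw [e]
      rw [intervalIntegral.integral_const_mul, integral_pow, zero_pow (by omega), sub_zero]
      push_cast
      rw [div_mul_div_comm]
      ring_nf
    have c4 : (∫ t in u..M, t * (((M - t)/(k:ℝ))^m/(m.factorial:ℝ)))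
        = (1/((k:ℝ)^m * (m.factorial:ℝ)))
            * (M * ((k:ℝ)^(m+1)/((m:ℝ)+1)) - (k:ℝ)^(m+2)/((m:ℝ)+2)) := by
      have e : ∀ t:ℝ, t * (((M - t)/(k:ℝ))^m/(m.factorial:ℝ))
          = (1/((k:ℝ)^m * (m.factorial:ℝ))) * (t * (M - t)^m) := fun t => by
        rw [div_pow]; ring
      simp_rw [e]
      rw [intervalIntegral.integral_const_mul, integral_id_mul_sub_pow', hMu]
    rw [h0, key 0, lint1, ← ENNReal.ofReal_add hI1 hI2,
      ENNReal.toReal_ofReal (add_nonneg hI1 hI2), c3, c4, hu_def, hM_def,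
      Nat.factorial_succ]
    push_cast
    simp only [one_div, inv_pow]
    field_simp
    ring
  · -- other coordinates
    intro j hj
    obtain ⟨i, rfl⟩ := Fin.eq_succ_of_ne_zero (h0 ▸ hj)
    have lint2 : (∫⁻ x in D, ENNReal.ofReal (x i.succ) ∂volume)
        = ENNReal.ofReal (∫ t in (0:ℝ)..u, ((a:ℝ)*t)^(m+1)/(((m+1).factorial:ℕ):ℝ))
          + ENNReal.ofReal (∫ t in u..M, ((M - t)/(k:ℝ))^(m+1)/(((m+1).factorial:ℕ):ℝ)) := by
      rw [hDeq]
      rw [show (∫⁻ x in Dset m R, ENNReal.ofReal (x i.succ) ∂volume)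
        = ∫⁻ x in Dset m R, ENNReal.ofReal (Fin.tail x i) ∂volume from rfl]
      rw [lintegral_Dset m hR (g := fun _ y => ENNReal.ofReal (y i))
        (ENNReal.measurable_ofReal.comp ((measurable_pi_apply i).comp measurable_snd))]
      simp_rw [Spx_lint m]
      rw [lintegral_Ioi_split hu huM _ ?_]
      · congr 1
        · have e1 : ∀ t ∈ Ioo (0:ℝ) u,
              (if 0 < R t then ENNReal.ofReal ((R t)^(m+1)/(((m+1).factorial:ℕ):ℝ)) else 0)
              = ENNReal.ofReal (((a:ℝ)*t)^(m+1)/(((m+1).factorial:ℕ):ℝ)) := by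
            intro t ht
            have hRt : R t = (a:ℝ)*t := by simp only [hR_def]; rw [if_pos ht.2.le]
            rw [hRt, if_pos (mul_pos hA ht.1)]
          rw [setLIntegral_congr_fun measurableSet_Ioo e1]
          exact lint_Ioo (by fun_prop) hu.le fun t ht =>
            div_nonneg (pow_nonneg (mul_nonneg hA.le ht.1.le) (m+1)) (Nat.cast_nonneg _)
        · have e2 : ∀ t ∈ Ioo u M,
              (if 0 < R t then ENNReal.ofReal ((R t)^(m+1)/(((m+1).factorial:ℕ):ℝ)) else 0)
              = ENNReal.ofReal (((M - t)/(k:ℝ))^(m+1)/(((m+1).factorial:ℕ):ℝ)) := by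
            intro t ht
            have hRt : R t = (M - t)/k := by simp only [hR_def]; rw [if_neg (not_le.2 ht.1)]
            rw [hRt, if_pos (div_pos (by linarith [ht.2]) hK)]
          rw [setLIntegral_congr_fun measurableSet_Ioo e2]
          exact lint_Ioo (by fun_prop) huM.le fun t ht =>
            div_nonneg (pow_nonneg (div_nonneg (by linarith [ht.2]) hK.le) _) (by positivity)
      · intro t ht
        have hRt : R t = (M - t)/k := by simp only [hR_def]; rw [if_neg (by linarith)]
        rw [hRt, if_neg (by
          apply not_lt.2
          apply div_nonpos_of_nonpos_of_nonneg <;> linarith)]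
    have hI1 : 0 ≤ ∫ t in (0:ℝ)..u, ((a:ℝ)*t)^(m+1)/(((m+1).factorial:ℕ):ℝ) :=
      intervalIntegral.integral_nonneg hu.le fun t ht =>
        div_nonneg (pow_nonneg (mul_nonneg hA.le ht.1) (m+1)) (Nat.cast_nonneg _)
    have hI2 : 0 ≤ ∫ t in u..M, ((M - t)/(k:ℝ))^(m+1)/(((m+1).factorial:ℕ):ℝ) :=
      intervalIntegral.integral_nonneg huM.le fun t ht =>
        div_nonneg (pow_nonneg (div_nonneg (by linarith [ht.2]) hK.le) _) (by positivity)
    have c1 : (∫ t in (0:ℝ)..u, ((a:ℝ)*t)^(m+1)/(((m+1).factorial:ℕ):ℝ))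
        = (a:ℝ)^(m+1) * u^(m+2) / ((((m+1).factorial:ℕ):ℝ) * ((m:ℝ)+2)) := by
      have e : ∀ t:ℝ, ((a:ℝ)*t)^(m+1)/(((m+1).factorial:ℕ):ℝ)
          = ((a:ℝ)^(m+1)/(((m+1).factorial:ℕ):ℝ)) * t^(m+1) := fun t => by rw [mul_pow]; ring
      simp_rw [e]
      rw [intervalIntegral.integral_const_mul, integral_pow, zero_pow (by omega), sub_zero]
      push_cast
      rw [div_mul_div_comm]
      ring_nf
    have c2 : (∫ t in u..M, ((M - t)/(k:ℝ))^(m+1)/(((m+1).factorial:ℕ):ℝ))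
        = (k:ℝ)^(m+2) / ((k:ℝ)^(m+1) * (((m+1).factorial:ℕ):ℝ) * ((m:ℝ)+2)) := by
      have e : ∀ t:ℝ, ((M - t)/(k:ℝ))^(m+1)/(((m+1).factorial:ℕ):ℝ)
          = (1/((k:ℝ)^(m+1) * (((m+1).factorial:ℕ):ℝ))) * (M - t)^(m+1) := fun t => by
        rw [div_pow]; ring
      simp_rw [e]
      rw [intervalIntegral.integral_const_mul, integral_sub_pow', hMu]
      push_cast
      rw [div_mul_div_comm]
      ring_nf
    rw [key i.succ, lint2, ← ENNReal.ofReal_add hI1 hI2,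
      ENNReal.toReal_ofReal (add_nonneg hI1 hI2), c1, c2, hu_def]
    push_cast
    simp only [one_div, inv_pow]
    field_simp
    ring
end
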